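/- arXiv:2511.18206 — 2 statements merged into one kernel-verified Lean document; each statement's English description precedes it below -/
import Mathlib

section
/- Let W be a discrete valuation ring with uniformizer p, let R be a commutative ring with p ∈ R, and let M be an R[1/p]-module. Let M₁, M₂ ⊆ M be finite free R-submodules, each of which spans M over R[1/p]. Let Φ be a set of ring homomorphisms φ : R → W, each sending p ∈ R to p ∈ W, such that for every r ∈ R with r ∉ pR there exists φ ∈ Φ with φ(r) ∉ pW. Suppose that for every φ ∈ Φ the images of W ⊗_{R,φ} M₁ and W ⊗_{R,φ} M₂ inside the W[1/p]-module W[1/p] ⊗_{R,φ} M coincide. Then M₁ = M₂ as submodules of M. -/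
open TensorProduct

/-- The base-change condition at a point `φ : R → W`: the images of
`W ⊗_{R,φ} M₁` and `W ⊗_{R,φ} M₂` inside `W[1/p] ⊗_{R,φ} M` coincide, i.e. the
`W`-spans of `{1 ⊗ m : m ∈ Mᵢ}` in `(Localization.Away pW) ⊗_{R,φ} M` agree. -/
def agreesAt {W R M : Type*} [CommRing W] [CommRing R] [AddCommGroup M] [Module R M]
    (pW : W) (φ : R →+* W) (M₁ M₂ : Submodule R M) : Prop :=
  letI : Algebra R W := φ.toAlgebra
  letI : SMulCommClass R W (Localization.Away pW) :=
    ⟨fun r w x => by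
      rw [← smul_one_smul W r x, ← smul_one_smul W r (w • x), smul_smul, smul_smul, mul_comm]⟩
  Submodule.span W ((fun m => (1 : Localization.Away pW) ⊗ₜ[R] m) '' (M₁ : Set M)) =
    Submodule.span W ((fun m => (1 : Localization.Away pW) ⊗ₜ[R] m) '' (M₂ : Set M))

theorem aux_le {W : Type*} [CommRing W] [IsDomain W] [IsDiscreteValuationRing W]
    (pW : W) (hpW : Irreducible pW)
    {R : Type*} [CommRing R] [IsDomain R] (pR : R) (hpR0 : pR ≠ 0)
    {M : Type*} [AddCommGroup M] [Module R M] [Module (Localization.Away pR) M]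
    [IsScalarTower R (Localization.Away pR) M]
    (M₁ M₂ : Submodule R M)
    (hfin₂ : Module.Finite R M₂) (hfree₂ : Module.Free R M₂)
    (hspan₂ : Submodule.span (Localization.Away pR) (M₂ : Set M) = ⊤)
    (Φ : Set (R →+* W))
    (hΦp : ∀ φ ∈ Φ, φ pR = pW)
    (hΦdense : ∀ r : R, r ∉ Ideal.span {pR} → ∃ φ ∈ Φ, φ r ∉ Ideal.span {pW})
    (hagree : ∀ φ ∈ Φ, agreesAt pW φ M₁ M₂) :
    M₁ ≤ M₂ := by
  classical
  -- cancellation of pR on M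
  have hcancel : ∀ x y : M, pR • x = pR • y → x = y := by
    intro x y h
    have hu : IsUnit (algebraMap R (Localization.Away pR) pR) :=
      IsLocalization.map_units (M := Submonoid.powers pR) _ ⟨pR, Submonoid.mem_powers pR⟩
    obtain ⟨u, hu⟩ := hu
    rw [← algebraMap_smul (Localization.Away pR) pR x,
      ← algebraMap_smul (Localization.Away pR) pR y, ← hu] at h
    calc x = (↑u⁻¹ : Localization.Away pR) • (↑u : Localization.Away pR) • x := by
            rw [smul_smul, Units.inv_mul, one_smul]
      _ = (↑u⁻¹ : Localization.Away pR) • (↑u : Localization.Away pR) • y := by rw [h]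
      _ = y := by rw [smul_smul, Units.inv_mul, one_smul]
  -- basis of M₂
  let b := Module.Free.chooseBasis R M₂
  let e : Module.Free.ChooseBasisIndex R M₂ → M := fun i => (b i : M)
  have hLIR : LinearIndependent R e :=
    b.linearIndependent.map' M₂.subtype M₂.ker_subtype
  have hLI : LinearIndependent (Localization.Away pR) e :=
    hLIR.localization (Localization.Away pR) (Submonoid.powers pR)
  have hspanR : Submodule.span R (Set.range e) = M₂ := by
    have h : Set.range e = M₂.subtype '' Set.range b := by
      rw [← Set.range_comp]; rfl
    rw [h, Submodule.span_image, Module.Basis.span_eq, Submodule.map_top, Submodule.range_subtype]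
  have htop : ⊤ ≤ Submodule.span (Localization.Away pR) (Set.range e) := by
    rw [← hspan₂, Submodule.span_le]
    intro x hx
    have hx' : x ∈ Submodule.span R (Set.range e) := by rw [hspanR]; exact hx
    exact Submodule.span_le_restrictScalars R (Localization.Away pR) (Set.range e) hx'
  let eb : Module.Basis (Module.Free.ChooseBasisIndex R M₂) (Localization.Away pR) M :=
    Module.Basis.mk hLI htop
  have hrepr : ∀ (x : M₂) (i),
      eb.repr (x : M) i = algebraMap R (Localization.Away pR) (b.repr x i) := by
    intro x i
    have hx : (x : M) = ∑ j, algebraMap R (Localization.Away pR) (b.repr x j) • eb j := by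
      have h2 := congrArg M₂.subtype (b.sum_repr x)
      simp only [map_sum, map_smul, Submodule.coe_subtype] at h2
      rw [← h2]
      refine Finset.sum_congr rfl fun j _ => ?_
      rw [Module.Basis.mk_apply, algebraMap_smul]
    rw [hx]
    exact congrFun (eb.repr_sum_self _) i
  -- existence of a power of pR bringing any element into M₂
  have hexists : ∀ m : M, ∃ n : ℕ, pR ^ n • m ∈ M₂ := by
    let N : Submodule (Localization.Away pR) M :=
      { carrier := {x | ∃ n : ℕ, pR ^ n • x ∈ M₂}
        add_mem' := by
          rintro x y ⟨n, hn⟩ ⟨k, hk⟩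
          refine ⟨n + k, ?_⟩
          rw [smul_add]
          refine add_mem ?_ ?_
          · rw [pow_add, mul_comm, mul_smul]
            exact Submodule.smul_mem _ _ hn
          · rw [pow_add, mul_smul]
            exact Submodule.smul_mem _ _ hk
        zero_mem' := ⟨0, by simpa using M₂.zero_mem⟩
        smul_mem' := by
          intro c x hx
          obtain ⟨n, hn⟩ := hx
          obtain ⟨⟨a, s⟩, hs⟩ := IsLocalization.surj (Submonoid.powers pR) c
          obtain ⟨k, hk⟩ := s.2
          dsimp only at hs
          have hk' : pR ^ k = (s : R) := hk
          refine ⟨k + n, ?_⟩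
          have h1 : pR ^ (k + n) • (c • x) = a • (pR ^ n • x) := by
            rw [pow_add, mul_comm, mul_smul,
              ← algebraMap_smul (Localization.Away pR) (pR ^ k) (c • x),
              smul_smul, hk', mul_comm, hs, algebraMap_smul, smul_comm]
          rw [h1]
          exact Submodule.smul_mem _ _ hn }
    have hle : Submodule.span (Localization.Away pR) (M₂ : Set M) ≤ N :=
      Submodule.span_le.2 (fun x hx => ⟨0, by simpa using hx⟩)
    intro m
    exact (hspan₂ ▸ hle) Submodule.mem_top
  -- the key step
  have step : ∀ m ∈ M₁, ∀ n : ℕ, pR ^ (n + 1) • m ∈ M₂ → pR ^ n • m ∈ M₂ := by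
    intro m hm n hy
    set y : M₂ := ⟨pR ^ (n + 1) • m, hy⟩ with hydef
    have claim : ∀ i, b.repr y i ∈ Ideal.span {pR} := by
      intro i
      by_contra hri
      obtain ⟨φ, hφ, hφr⟩ := hΦdense _ hri
      letI : Algebra R W := φ.toAlgebra
      letI : SMulCommClass R W (Localization.Away pW) :=
        ⟨fun r w x => by
          rw [← smul_one_smul W r x, ← smul_one_smul W r (w • x), smul_smul, smul_smul, mul_comm]⟩
      have hag := hagree φ hφ
      unfold agreesAt at hag
      have hmem : (1 : Localization.Away pW) ⊗ₜ[R] m ∈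
          Submodule.span W ((fun m => (1 : Localization.Away pW) ⊗ₜ[R] m) '' (M₂ : Set M)) := by
        rw [← hag]
        exact Submodule.subset_span ⟨m, hm, rfl⟩
      have halg : ∀ r : R, algebraMap R (Localization.Away pW) r
          = algebraMap W (Localization.Away pW) (φ r) :=
        fun r => IsScalarTower.algebraMap_apply R W (Localization.Away pW) r
      have hunit : IsUnit (algebraMap R (Localization.Away pW) pR) := by
        rw [halg, hΦp φ hφ]
        exact IsLocalization.map_units (M := Submonoid.powers pW) _ ⟨pW, Submonoid.mem_powers pW⟩
      let ψ : Localization.Away pR →+* Localization.Away pW :=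
        IsLocalization.Away.lift pR hunit
      have hψ : ∀ r : R, ψ (algebraMap R (Localization.Away pR) r)
          = algebraMap R (Localization.Away pW) r :=
        fun r => IsLocalization.Away.lift_eq pR hunit r
      let ψl : Localization.Away pR →ₗ[R] Localization.Away pW :=
        { toFun := ψ
          map_add' := map_add ψ
          map_smul' := by
            intro r x
            simp only [RingHom.id_apply, Algebra.smul_def, map_mul, hψ] }
      let coordR : M →ₗ[R] Localization.Away pW :=
        ψl.comp ((eb.coord i).restrictScalars R)
      let F : Localization.Away pW ⊗[R] M →ₗ[Localization.Away pW] Localization.Away pW :=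
        coordR.liftBaseChange (Localization.Away pW)
      have hF1 : ∀ x : M, F ((1 : Localization.Away pW) ⊗ₜ[R] x) = ψ (eb.repr x i) := by
        intro x
        simp [F, coordR, ψl, Module.Basis.coord_apply]
      have hrange : F ((1 : Localization.Away pW) ⊗ₜ[R] m)
          ∈ LinearMap.range (Algebra.linearMap W (Localization.Away pW)) := by
        refine Submodule.span_induction
          (p := fun x _ => F x ∈ LinearMap.range (Algebra.linearMap W (Localization.Away pW)))
          ?_ ?_ ?_ ?_ hmem
        · rintro _ ⟨x, hx, rfl⟩
          refine ⟨φ (b.repr ⟨x, hx⟩ i), ?_⟩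
          rw [Algebra.linearMap_apply, ← halg, hF1, hrepr ⟨x, hx⟩ i, hψ]
        · simp
        · intro x z _ _ hx hz
          rw [map_add]; exact add_mem hx hz
        · intro w x _ hx
          rw [F.map_smul_of_tower]
          exact Submodule.smul_mem _ w hx
      obtain ⟨w, hw⟩ := hrange
      have inj : Function.Injective (algebraMap W (Localization.Away pW)) :=
        IsLocalization.injective _ (powers_le_nonZeroDivisors_of_noZeroDivisors hpW.ne_zero)
      have c1 : F ((1 : Localization.Away pW) ⊗ₜ[R] (y : M))
          = algebraMap W (Localization.Away pW) (φ (b.repr y i)) := by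
        rw [hF1, hrepr y i, hψ, halg]
      have c2 : F ((1 : Localization.Away pW) ⊗ₜ[R] (y : M))
          = algebraMap W (Localization.Away pW) (pW ^ (n + 1) * w) := by
        have hy2 : (y : M) = pR ^ (n + 1) • m := rfl
        rw [hy2, TensorProduct.tmul_smul, F.map_smul_of_tower, ← hw, Algebra.smul_def,
          halg, map_pow, hΦp φ hφ, map_mul, map_pow, Algebra.linearMap_apply]
      have heq : φ (b.repr y i) = pW ^ (n + 1) * w := inj (c1.symm.trans c2)
      exact hφr (Ideal.mem_span_singleton.2 ⟨pW ^ n * w, by rw [heq]; ring⟩)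
    choose s hs using fun i => Ideal.mem_span_singleton'.1 (claim i)
    have hz : pR ^ n • m = ((∑ i, s i • b i : M₂) : M) := by
      apply hcancel
      have h1 : pR • (pR ^ n • m) = (y : M) := by
        rw [← mul_smul, ← pow_succ']
      rw [h1]
      have h2 := congrArg M₂.subtype (b.sum_repr y)
      simp only [map_sum, map_smul, Submodule.coe_subtype] at h2
      have hy2 : (y : M) = pR ^ (n + 1) • m := rfl
      rw [← h2]
      simp only [AddSubmonoidClass.coe_finset_sum, SetLike.val_smul]
      rw [Finset.smul_sum]
      refine Finset.sum_congr rfl fun j _ => ?_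
      rw [← hs j, mul_comm, mul_smul]
    rw [hz]
    exact Submodule.coe_mem _
  -- conclusion by induction
  intro m hm
  obtain ⟨n, hn⟩ := hexists m
  clear hexists
  induction n with
  | zero => simpa using hn
  | succ n ih => exact ih (step m hm n hn)

/-- Two finite free spanning `R`-lattices in an `R[1/p]`-module that agree after
base change along enough maps to a DVR `W` are equal. -/
theorem stmt_4 {W : Type*} [CommRing W] [IsDomain W] [IsDiscreteValuationRing W]
    (pW : W) (hpW : Irreducible pW)
    {R : Type*} [CommRing R] [IsDomain R] (pR : R) (hpR0 : pR ≠ 0) (hpRu : ¬ IsUnit pR)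
    {M : Type*} [AddCommGroup M] [Module R M] [Module (Localization.Away pR) M]
    [IsScalarTower R (Localization.Away pR) M]
    (M₁ M₂ : Submodule R M)
    (hfin₁ : Module.Finite R M₁) (hfree₁ : Module.Free R M₁)
    (hfin₂ : Module.Finite R M₂) (hfree₂ : Module.Free R M₂)
    (hspan₁ : Submodule.span (Localization.Away pR) (M₁ : Set M) = ⊤)
    (hspan₂ : Submodule.span (Localization.Away pR) (M₂ : Set M) = ⊤)
    (Φ : Set (R →+* W))
    (hΦp : ∀ φ ∈ Φ, φ pR = pW)
    (hΦdense : ∀ r : R, r ∉ Ideal.span {pR} → ∃ φ ∈ Φ, φ r ∉ Ideal.span {pW})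
    (hagree : ∀ φ ∈ Φ, agreesAt pW φ M₁ M₂) :
    M₁ = M₂ := by
  refine le_antisymm ?_ ?_
  · exact aux_le pW hpW pR hpR0 M₁ M₂ hfin₂ hfree₂ hspan₂ Φ hΦp hΦdense hagree
  · refine aux_le pW hpW pR hpR0 M₂ M₁ hfin₁ hfree₁ hspan₁ Φ hΦp hΦdense ?_
    intro φ hφ
    have h := hagree φ hφ
    unfold agreesAt at h ⊢
    exact h.symm
end

section
/- Let k be an algebraically closed field, V a nonzero finite-dimensional k-vector space, Γ a group, and N a normal subgroup of Γ. Let ρ₁, ρ₂ : Γ → GL(V) be group homomorphisms such that ρ₁(n) = ρ₂(n) for all n ∈ N, and such that the restriction of ρ₁ to N is irreducible (no N-invariant subspace other than 0 and V). Then there exists a group homomorphism χ : Γ → k^× with χ(n) = 1 for all n ∈ N and ρ₂(γ) = χ(γ) • ρ₁(γ) for all γ ∈ Γ. -/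
/-- Two representations of `Γ` agreeing on a normal subgroup `N`, with the
restriction to `N` irreducible, differ by a character trivial on `N`. -/
theorem stmt_5 {k : Type*} [Field k] [IsAlgClosed k]
    {V : Type*} [AddCommGroup V] [Module k V] [FiniteDimensional k V] [Nontrivial V]
    {Γ : Type*} [Group Γ] (N : Subgroup Γ) [N.Normal]
    (ρ₁ ρ₂ : Γ →* (V ≃ₗ[k] V))
    (hagree : ∀ n ∈ N, ρ₁ n = ρ₂ n)
    (hirr : ∀ W : Submodule k V, (∀ n ∈ N, ∀ x ∈ W, ρ₁ n x ∈ W) → W = ⊥ ∨ W = ⊤) :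
    ∃ χ : Γ →* kˣ, (∀ n ∈ N, χ n = 1) ∧
      ∀ γ : Γ, ∀ x : V, ρ₂ γ x = (χ γ : k) • (ρ₁ γ x) := by
  classical
  have mulA : ∀ (e f : V ≃ₗ[k] V) (x : V), (e * f) x = e (f x) := fun _ _ _ => rfl
  have oneA : ∀ x : V, (1 : V ≃ₗ[k] V) x = x := fun _ => rfl
  have app₁ : ∀ (a b : Γ) (x : V), ρ₁ (a * b) x = ρ₁ a (ρ₁ b x) := by
    intro a b x; rw [map_mul, mulA]
  have app₂ : ∀ (a b : Γ) (x : V), ρ₂ (a * b) x = ρ₂ a (ρ₂ b x) := by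
    intro a b x; rw [map_mul, mulA]
  have hsymm : ∀ (γ : Γ) (y : V), (ρ₁ γ).symm y = ρ₁ γ⁻¹ y := by
    intro γ y
    rw [LinearEquiv.symm_apply_eq, ← app₁, mul_inv_cancel, map_one, oneA]
  -- For each γ there is a scalar c with ρ₂ γ = c • ρ₁ γ.
  have key : ∀ γ : Γ, ∃ c : k, ∀ x : V, ρ₂ γ x = c • ρ₁ γ x := by
    intro γ
    set g : Module.End k V :=
      ((ρ₁ γ).symm.toLinearMap).comp ((ρ₂ γ).toLinearMap) with hgdef
    have hcomm : ∀ n ∈ N, ∀ x : V, g (ρ₁ n x) = ρ₁ n (g x) := by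
      intro n hn x
      have hm : γ * n * γ⁻¹ ∈ N := Subgroup.Normal.conj_mem ‹N.Normal› n hn γ
      simp only [hgdef, LinearMap.comp_apply, LinearEquiv.coe_coe]
      rw [LinearEquiv.symm_apply_eq]
      have h1 : ρ₂ γ (ρ₁ n x) = ρ₁ (γ * n * γ⁻¹) (ρ₂ γ x) := by
        calc ρ₂ γ (ρ₁ n x) = ρ₂ γ (ρ₂ n x) := by rw [hagree n hn]
          _ = ρ₂ (γ * n) x := (app₂ γ n x).symm
          _ = ρ₂ (γ * n * γ⁻¹ * γ) x := by rw [inv_mul_cancel_right]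
          _ = ρ₂ (γ * n * γ⁻¹) (ρ₂ γ x) := app₂ _ _ _
          _ = ρ₁ (γ * n * γ⁻¹) (ρ₂ γ x) := by rw [hagree _ hm]
      rw [h1, hsymm, ← app₁, ← app₁, mul_assoc]
    obtain ⟨c, hc⟩ := Module.End.exists_eigenvalue g
    have hW : ∀ n ∈ N, ∀ x ∈ g.eigenspace c, ρ₁ n x ∈ g.eigenspace c := by
      intro n hn x hx
      rw [Module.End.mem_eigenspace_iff] at hx ⊢
      rw [hcomm n hn, hx, map_smul]
    rcases hirr (g.eigenspace c) hW with hbot | htop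
    · exact absurd hbot hc
    · refine ⟨c, fun x => ?_⟩
      have hx : g x = c • x := by
        rw [← Module.End.mem_eigenspace_iff, htop]; trivial
      simp only [hgdef, LinearMap.comp_apply, LinearEquiv.coe_coe] at hx
      have := congrArg (ρ₁ γ) hx
      rwa [LinearEquiv.apply_symm_apply, map_smul] at this
  choose c hc using key
  -- uniqueness of the scalar
  obtain ⟨x₀, hx₀⟩ := exists_ne (0 : V)
  have uniq : ∀ γ : Γ, ∀ c' : k, (∀ x : V, ρ₂ γ x = c' • ρ₁ γ x) → c γ = c' := by
    intro γ c' h'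
    have h1 := (hc γ x₀).symm.trans (h' x₀)
    have hne : ρ₁ γ x₀ ≠ 0 := by
      intro h
      exact hx₀ ((ρ₁ γ).map_eq_zero_iff.mp h)
    exact smul_left_injective k hne h1
  have hne0 : ∀ γ : Γ, c γ ≠ 0 := by
    intro γ h0
    have h := hc γ ((ρ₁ γ).symm x₀)
    rw [h0, zero_smul] at h
    exact hx₀ ((ρ₁ γ).symm.map_eq_zero_iff.mp ((ρ₂ γ).map_eq_zero_iff.mp h))
  have hmul : ∀ γ δ : Γ, c (γ * δ) = c γ * c δ := by
    intro γ δ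
    refine uniq (γ * δ) (c γ * c δ) (fun x => ?_)
    rw [app₂, app₁, hc δ x, map_smul, hc γ, smul_smul, mul_comm]
  have honeN : ∀ n ∈ N, c n = 1 := by
    intro n hn
    refine uniq n 1 (fun x => ?_)
    rw [one_smul, hagree n hn]
  refine ⟨{ toFun := fun γ => Units.mk0 (c γ) (hne0 γ),
            map_one' := ?_, map_mul' := ?_ }, ?_, ?_⟩
  · ext
    simp only [Units.val_mk0, Units.val_one]
    exact uniq 1 1 (fun x => by rw [map_one, map_one, one_smul])
  · intro γ δ
    ext
    simp [hmul γ δ]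
  · intro n hn
    ext
    simpa using honeN n hn
  · intro γ x
    exact hc γ x
end
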